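/- arXiv:1603.08954 — 7 statements merged into one kernel-verified Lean document; each statement's English description precedes it below -/
import Mathlib

section
/- Let K ⊆ ℝ^m be a pointed, full-dimensional rational polyhedral cone and let L ⊆ ℝ^m be a full-rank lattice. Then there exists a ℤ-basis λ₁, …, λ_m of L such that K ∩ L ⊆ { ν₁λ₁ + ⋯ + ν_mλ_m : ν₁, …, ν_m ∈ ℕ }. -/
/-!
Pointedness puts `0` outside the convex hull of the nonzero generators of `K`, so a separating
functional is positive on all of them. In the coordinates of the lattice basis, rounding a large
multiple of it gives an integral functional `w` with the same property. By the Smith normal form,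
`w` is a positive multiple of a row of some unimodular integer matrix `G`; adding large multiples
of that row to the other rows makes every row nonnegative on the generators. The lattice basis
dual to the rows of this matrix then has nonnegative coordinates on all of `K`.
-/

open Pointwise Set Filter Matrix

namespace PointedCone

variable {E : Type*} [AddCommGroup E] [Module ℝ E]

theorem coe_hull_finset (s : Finset E) :
    (hull ℝ (s : Set E) : Set E) =
      {x | ∃ c : E → ℝ, (∀ v ∈ s, 0 ≤ c v) ∧ x = ∑ v ∈ s, c v • v} := by
  ext x
  simp only [SetLike.mem_coe, Set.mem_ofPred_eq]
  constructor
  · rw [Submodule.mem_span_finset]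
    rintro ⟨c, -, rfl⟩
    exact ⟨fun v => c v, fun v _ => (c v).2, by simp⟩
  · rintro ⟨c, hc, rfl⟩
    rw [Submodule.mem_span_finset']
    exact ⟨fun v => ⟨c v, hc v v.2⟩, Finset.sum_coe_sort s fun v => c v • v⟩

theorem map_nonneg_of_mem_hull {s : Set E} {f : E →ₗ[ℝ] ℝ} (hf : ∀ v ∈ s, 0 ≤ f v)
    {x : E} (hx : x ∈ hull ℝ s) : 0 ≤ f x := by
  induction hx using Submodule.span_induction with
  | mem v hv => exact hf v hv
  | zero => simp
  | add x y _ _ hx hy => rw [map_add]; exact add_nonneg hx hy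
  | smul r x _ hx =>
    change 0 ≤ f ((r : ℝ) • x)
    rw [map_smul, smul_eq_mul]
    exact mul_nonneg r.2 hx

theorem zero_notMem_convexHull_of_salient {C : PointedCone ℝ E}
    (hC : (C ∩ -C : Set E) = {0}) {s : Finset E} (hsC : (s : Set E) ⊆ C) (hs0 : (0 : E) ∉ s) :
    (0 : E) ∉ convexHull ℝ (s : Set E) := by
  classical
  rw [Finset.mem_convexHull']
  rintro ⟨w, hw0, hw1, hw⟩
  obtain ⟨v₀, hv₀, hpos⟩ : ∃ v₀ ∈ s, 0 < w v₀ := by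
    simpa using Finset.exists_lt_of_sum_lt (f := 0) (g := w) (by simp [hw1])
  have hneg : -(w v₀ • v₀) = ∑ v ∈ s.erase v₀, w v • v := by
    rw [neg_eq_iff_add_eq_zero, Finset.add_sum_erase s (fun v => w v • v) hv₀, hw]
  have hmem : w v₀ • v₀ ∈ (C ∩ -C : Set E) :=
    ⟨C.smul_mem hpos.le (hsC hv₀), by
      rw [Set.mem_neg, hneg]
      exact Submodule.sum_mem _ fun v hv =>
        C.smul_mem (hw0 v (Finset.mem_of_mem_erase hv)) (hsC (Finset.mem_of_mem_erase hv))⟩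
  rw [hC, Set.mem_singleton_iff, smul_eq_zero] at hmem
  exact hmem.elim hpos.ne' fun h => hs0 (h ▸ hv₀)

end PointedCone

theorem exists_pos_of_zero_notMem_convexHull {E : Type*} [NormedAddCommGroup E]
    [NormedSpace ℝ E] {s : Finset E} (h : (0 : E) ∉ convexHull ℝ (s : Set E)) :
    ∃ f : E →L[ℝ] ℝ, ∀ v ∈ s, 0 < f v := by
  obtain ⟨f, u, hf0, hfs⟩ := geometric_hahn_banach_point_closed (convex_convexHull ℝ _)
    (s.finite_toSet.isCompact_convexHull (𝕜 := ℝ)).isClosed h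
  rw [map_zero] at hf0
  exact ⟨f, fun v hv => hf0.trans (hfs v (subset_convexHull ℝ _ hv))⟩

theorem PointedCone.exists_pos_of_salient {E : Type*} [NormedAddCommGroup E] [NormedSpace ℝ E]
    (s : Finset E) (hs : (hull ℝ (s : Set E) ∩ -hull ℝ (s : Set E) : Set E) = {0}) :
    ∃ f : E →L[ℝ] ℝ, ∀ v ∈ s, v ≠ 0 → 0 < f v := by
  classical
  obtain ⟨f, hf⟩ := exists_pos_of_zero_notMem_convexHull (s := s.filter (· ≠ 0))
    (zero_notMem_convexHull_of_salient hs
      (fun v hv => subset_hull (Finset.mem_filter.1 hv).1) (by simp))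
  exact ⟨f, fun v hv hv0 => hf v (Finset.mem_filter.2 ⟨hv, hv0⟩)⟩

theorem exists_int_dotProduct_pos {ι : Type*} [Fintype ι] {t : Finset (ι → ℝ)} {y : ι → ℝ}
    (hy : ∀ v ∈ t, 0 < y ⬝ᵥ v) : ∃ w : ι → ℤ, ∀ v ∈ t, 0 < (Int.cast ∘ w) ⬝ᵥ v := by
  have hceil (n : ℕ) (v : ι → ℝ) :
      n * (y ⬝ᵥ v) - ∑ i, |v i| ≤ (fun i => (⌈n * y i⌉ : ℝ)) ⬝ᵥ v := by
    rw [dotProduct, dotProduct, Finset.mul_sum, ← Finset.sum_sub_distrib]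
    refine Finset.sum_le_sum fun i _ => ?_
    have h₁ := Int.le_ceil (n * y i)
    have h₂ := Int.ceil_lt_add_one (n * y i)
    nlinarith [neg_abs_le (v i), le_abs_self (v i)]
  have hev : ∀ v ∈ t, ∀ᶠ n : ℕ in atTop, 0 < (fun i => (⌈n * y i⌉ : ℝ)) ⬝ᵥ v := fun v hv =>
    ((tendsto_atTop_add_const_right _ _
      (tendsto_natCast_atTop_atTop.atTop_mul_const (hy v hv))).eventually_gt_atTop 0).mono
      fun n hn => hn.trans_le (hceil n v)
  obtain ⟨n, hn⟩ := ((eventually_all_finset t).2 hev).exists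
  exact ⟨fun i => ⌈n * y i⌉, hn⟩

theorem Module.Basis.exists_eq_smul_of_ne_zero {ι M : Type*} [Fintype ι] [AddCommGroup M]
    (b : Basis ι ℤ M) {w : M} (hw : w ≠ 0) :
    ∃ (g : Basis ι ℤ M) (j : ι) (k : ℤ), 0 < k ∧ w = k • g j := by
  have := Module.Free.of_basis b
  -- `span {w}` has rank one, so its Smith basis is a single vector `a • bM j`.
  obtain ⟨n, snf⟩ := (Submodule.span ℤ {w}).smithNormalForm b
  have hn : n = 1 := by
    have := finrank_span_set_eq_card (R := ℤ) (s := {w}) (LinearIndepOn.singleton hw)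
    rw [Module.finrank_eq_card_basis snf.bN] at this
    simpa using this
  subst hn
  obtain ⟨k, hk⟩ : ∃ k : ℤ, w = k • snf.bM (snf.f 0) := by
    have hsum := congrArg Subtype.val (snf.bN.sum_repr ⟨w, Submodule.mem_span_singleton_self w⟩)
    rw [Fin.sum_univ_one, Submodule.coe_smul, snf.snf, smul_smul] at hsum
    exact ⟨_, hsum.symm⟩
  rcases lt_trichotomy k 0 with hneg | rfl | hpos
  · exact ⟨snf.bM.map (LinearEquiv.neg ℤ), snf.f 0, -k, neg_pos.2 hneg, by simpa using hk⟩
  · exact absurd (by simpa using hk) hw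
  · exact ⟨snf.bM, snf.f 0, k, hpos, hk⟩

namespace Matrix.GeneralLinearGroup

variable {ι : Type*} [Fintype ι] [DecidableEq ι]

theorem map_mulVec_intCast (A : GL ι ℤ) (ν : ι → ℤ) :
    (A.map (Int.castRingHom ℝ) : Matrix ι ι ℝ) *ᵥ (Int.cast ∘ ν) =
      Int.cast ∘ ((A : Matrix ι ι ℤ) *ᵥ ν) :=
  funext fun i => ((Int.castRingHom ℝ).map_mulVec _ _ i).symm

def shear (u : ι → ℤ) (j : ι) (hu : u j = 0) : GL ι ℤ where
  val := 1 + vecMulVec u (Pi.single j 1)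
  inv := 1 - vecMulVec u (Pi.single j 1)
  val_inv := by simp [add_mul, mul_sub, vecMulVec_mul_vecMulVec, hu]
  inv_val := by simp [sub_mul, mul_add, vecMulVec_mul_vecMulVec, hu]

theorem map_shear_mul_mulVec_apply (u : ι → ℤ) (j₀ : ι) (hu : u j₀ = 0) (G : GL ι ℤ)
    (v : ι → ℝ) (j : ι) :
    ((shear u j₀ hu * G).map (Int.castRingHom ℝ) *ᵥ v) j =
      (G.map (Int.castRingHom ℝ) *ᵥ v) j + u j * (G.map (Int.castRingHom ℝ) *ᵥ v) j₀ := by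
  rw [map_mul, Units.val_mul, ← mulVec_mulVec]
  simp [shear, mulVec, dotProduct, Pi.single_apply, vecMulVec, add_mul, Finset.sum_add_distrib,
    Matrix.one_apply]

theorem exists_mulVec_nonneg_of_pos (G : GL ι ℤ) (j₀ : ι) {t : Finset (ι → ℝ)}
    (ht : ∀ v ∈ t, 0 < (G.map (Int.castRingHom ℝ) *ᵥ v) j₀) :
    ∃ A : GL ι ℤ, ∀ v ∈ t, 0 ≤ (A.map (Int.castRingHom ℝ) : Matrix ι ι ℝ) *ᵥ v := by
  set Gℝ := (G.map (Int.castRingHom ℝ) : Matrix ι ι ℝ)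
  obtain ⟨N, hN⟩ : ∃ N : ℕ, ∀ v ∈ t, ∀ j, 0 ≤ (Gℝ *ᵥ v) j + N * (Gℝ *ᵥ v) j₀ :=
    ((eventually_all_finset t).2 fun v hv => eventually_all.2 fun j =>
      ((tendsto_natCast_atTop_atTop.atTop_mul_const (ht v hv)).eventually_ge_atTop
        (-(Gℝ *ᵥ v) j)).mono fun n hn => by linarith).exists
  refine ⟨shear (Function.update (fun _ => (N : ℤ)) j₀ 0) j₀ (by simp) * G, fun v hv j => ?_⟩
  rw [Pi.zero_apply, map_shear_mul_mulVec_apply]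
  rcases eq_or_ne j j₀ with rfl | hj
  · simpa only [Function.update_self, Int.cast_zero, zero_mul, add_zero] using (ht v hv).le
  · simpa only [Function.update_of_ne hj, Int.cast_natCast] using hN v hv j

theorem exists_row_smul_eq {w : ι → ℤ} (hw : w ≠ 0) :
    ∃ (G : GL ι ℤ) (j : ι) (k : ℤ), 0 < k ∧ w = k • (G : Matrix ι ι ℤ) j := by
  obtain ⟨g, j, k, hk, rfl⟩ := (Pi.basisFun ℤ ι).exists_eq_smul_of_ne_zero hw
  have hG : IsUnit (Matrix.of fun j i => g j i) := by
    rw [← isUnit_transpose]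
    have := (Pi.basisFun ℤ ι).invertibleToMatrix g
    exact isUnit_of_invertible ((Pi.basisFun ℤ ι).toMatrix g)
  exact ⟨hG.unit, j, k, hk, rfl⟩

theorem exists_mulVec_nonneg {t : Finset (ι → ℝ)} {y : ι → ℝ} (hy : ∀ v ∈ t, 0 < y ⬝ᵥ v) :
    ∃ A : GL ι ℤ, ∀ v ∈ t, 0 ≤ (A.map (Int.castRingHom ℝ) : Matrix ι ι ℝ) *ᵥ v := by
  rcases t.eq_empty_or_nonempty with rfl | ⟨v₀, hv₀⟩
  · exact ⟨1, by simp⟩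
  obtain ⟨w, hw⟩ := exists_int_dotProduct_pos hy
  have hw0 : w ≠ 0 := by
    rintro rfl
    simpa using hw v₀ hv₀
  obtain ⟨G, j₀, k, hk, rfl⟩ := exists_row_smul_eq hw0
  refine exists_mulVec_nonneg_of_pos G j₀ fun v hv =>
    pos_of_mul_pos_right ?_ (Int.cast_nonneg hk.le)
  have hpair : (Int.cast ∘ (k • (G : Matrix ι ι ℤ) j₀)) ⬝ᵥ v =
      k * ((G.map (Int.castRingHom ℝ) : Matrix ι ι ℝ) *ᵥ v) j₀ := by
    simp [mulVec, dotProduct, Finset.mul_sum, mul_assoc]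
  exact hpair ▸ hw v hv

end Matrix.GeneralLinearGroup

namespace Module.Basis

variable {ι V : Type*} [Fintype ι] [AddCommGroup V] [Module ℝ V]

theorem equivFun_sum_zsmul (b : Basis ι ℝ V) (ν : ι → ℤ) :
    b.equivFun (∑ i, ν i • b i) = Int.cast ∘ ν := by
  simp_rw [← Int.cast_smul_eq_zsmul ℝ, ← b.equivFun_symm_apply, LinearEquiv.apply_symm_apply]
  rfl

theorem mem_closure_range_iff (b : Basis ι ℝ V) {x : V} :
    x ∈ AddSubgroup.closure (range b) ↔ ∃ ν : ι → ℤ, b.equivFun x = Int.cast ∘ ν := by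
  rw [AddSubgroup.mem_closure_range_iff_of_fintype]
  refine ⟨fun ⟨ν, hν⟩ => ⟨ν, hν ▸ b.equivFun_sum_zsmul ν⟩, fun ⟨ν, hν⟩ => ⟨ν, ?_⟩⟩
  rw [← b.equivFun.injective.eq_iff, hν, equivFun_sum_zsmul]

theorem existsUnique_eq_sum_zsmul (b : Basis ι ℝ V) {x : V}
    (hx : x ∈ AddSubgroup.closure (range b)) : ∃! ν : ι → ℤ, x = ∑ i, ν i • b i := by
  obtain ⟨ν, rfl⟩ := AddSubgroup.mem_closure_range_iff_of_fintype.1 hx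
  refine ⟨ν, rfl, fun μ (hμ : _ = _) => (Int.cast_injective (α := ℝ)).comp_left ?_⟩
  change Int.cast ∘ μ = Int.cast ∘ ν
  rw [← b.equivFun_sum_zsmul, ← b.equivFun_sum_zsmul, hμ]

theorem exists_eq_sum_natCast_smul (b : Basis ι ℝ V) {x : V}
    (hx : x ∈ AddSubgroup.closure (range b)) (h : 0 ≤ b.equivFun x) :
    ∃ ν : ι → ℕ, x = ∑ i, (ν i : ℝ) • b i := by
  obtain ⟨ν, rfl⟩ := AddSubgroup.mem_closure_range_iff_of_fintype.1 hx
  rw [equivFun_sum_zsmul] at h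
  refine ⟨fun i => (ν i).toNat, Finset.sum_congr rfl fun i _ => ?_⟩
  have : 0 ≤ ν i := by simpa using h i
  rw [← Int.cast_smul_eq_zsmul ℝ, ← Int.toNat_of_nonneg this]
  rfl

variable [DecidableEq ι]

theorem exists_closure_range_eq_of_GL (b : Basis ι ℝ V) (A : GL ι ℤ) :
    ∃ b' : Basis ι ℝ V, AddSubgroup.closure (range b') = AddSubgroup.closure (range b) ∧
      ∀ x, b'.equivFun x = (A.map (Int.castRingHom ℝ) : Matrix ι ι ℝ) *ᵥ b.equivFun x := by
  set b' := Basis.ofEquivFun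
    (b.equivFun ≪≫ₗ (GeneralLinearGroup.toLin (A.map (Int.castRingHom ℝ))).toLinearEquiv)
  have hb' (x : V) :
      b'.equivFun x = (A.map (Int.castRingHom ℝ) : Matrix ι ι ℝ) *ᵥ b.equivFun x := by
    simp [b', equivFun_ofEquivFun]
  have hb (x : V) :
      b.equivFun x = (A⁻¹.map (Int.castRingHom ℝ) : Matrix ι ι ℝ) *ᵥ b'.equivFun x := by
    rw [hb', mulVec_mulVec, ← Units.val_mul, ← map_mul, inv_mul_cancel, map_one, Units.val_one,
      one_mulVec]
  refine ⟨b', AddSubgroup.ext fun x => ?_, hb'⟩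
  rw [mem_closure_range_iff, mem_closure_range_iff]
  constructor
  · rintro ⟨ν, hν⟩
    exact ⟨_, by rw [hb, hν, GeneralLinearGroup.map_mulVec_intCast]⟩
  · rintro ⟨ν, hν⟩
    exact ⟨_, by rw [hb', hν, GeneralLinearGroup.map_mulVec_intCast]⟩

theorem exists_closure_range_eq_nonneg_on_hull (b : Basis ι ℝ V) (s : Finset V)
    (f : V →ₗ[ℝ] ℝ) (hf : ∀ v ∈ s, v ≠ 0 → 0 < f v) :
    ∃ b' : Basis ι ℝ V, AddSubgroup.closure (range b') = AddSubgroup.closure (range b) ∧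
      ∀ x ∈ PointedCone.hull ℝ (s : Set V), 0 ≤ b'.equivFun x := by
  classical
  have hfb (v : V) : f v = (fun i => f (b i)) ⬝ᵥ b.equivFun v := by
    conv_lhs => rw [← b.sum_equivFun v]
    simp only [map_sum, map_smul, smul_eq_mul, dotProduct, mul_comm]
  obtain ⟨A, hA⟩ := GeneralLinearGroup.exists_mulVec_nonneg
    (t := (s.filter (· ≠ 0)).image b.equivFun) (y := fun i => f (b i)) (by
      simp only [Finset.mem_image, Finset.mem_filter]
      rintro _ ⟨v, ⟨hv, hv0⟩, rfl⟩
      exact hfb v ▸ hf v hv hv0)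
  obtain ⟨b', hspan, hb'⟩ := b.exists_closure_range_eq_of_GL A
  refine ⟨b', hspan, fun x hx j => ?_⟩
  refine PointedCone.map_nonneg_of_mem_hull (f := LinearMap.proj j ∘ₗ b'.equivFun.toLinearMap)
    (fun v hv => ?_) hx
  rcases eq_or_ne v 0 with rfl | hv0
  · simp
  · simpa [hb'] using hA _ (Finset.mem_image_of_mem _ (Finset.mem_filter.2 ⟨hv, hv0⟩)) j

end Module.Basis

theorem pointed_cone_in_positive_octant_of_lattice_basis_general
    (m : ℕ) (K : Set (Fin m → ℝ))
    -- `K` is a rational polyhedral cone: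
    (hK : ∃ s : Finset (Fin m → ℝ), (∀ v ∈ s, ∀ i, ∃ q : ℚ, v i = (q : ℝ)) ∧
      K = {x | ∃ c : (Fin m → ℝ) → ℝ, (∀ v ∈ s, 0 ≤ c v) ∧ x = ∑ v ∈ s, c v • v})
    -- `K` is pointed:
    (hpointed : K ∩ (-K) = {0})
    -- `L` is a full-rank lattice:
    (bL : Module.Basis (Fin m) ℝ (Fin m → ℝ))
    (L : AddSubgroup (Fin m → ℝ))
    (hL : L = AddSubgroup.closure (Set.range bL)) :
    ∃ lam : Fin m → (Fin m → ℝ),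
      (∀ i, lam i ∈ L) ∧
      (∀ x ∈ L, ∃! ν : Fin m → ℤ, x = ∑ i, ν i • lam i) ∧
      (∀ x ∈ K ∩ (L : Set (Fin m → ℝ)), ∃ ν : Fin m → ℕ, x = ∑ i, (ν i : ℝ) • lam i) := by
  obtain ⟨s, -, rfl⟩ := hK
  rw [← PointedCone.coe_hull_finset] at hpointed ⊢
  obtain ⟨f, hf⟩ := PointedCone.exists_pos_of_salient s hpointed
  obtain ⟨lam, hspan, hlam⟩ := bL.exists_closure_range_eq_nonneg_on_hull s f hf
  subst hL
  refine ⟨lam, fun i => hspan ▸ AddSubgroup.subset_closure ⟨i, rfl⟩,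
    fun x hx => lam.existsUnique_eq_sum_zsmul (hspan ▸ hx), fun x ⟨hxK, hxL⟩ => ?_⟩
  exact lam.exists_eq_sum_natCast_smul (hspan ▸ hxL) (hlam x hxK)

/-- Let `K ⊆ ℝ^m` be a pointed, full-dimensional rational polyhedral cone
and let `L ⊆ ℝ^m` be a full-rank lattice. Then there exists a ℤ-basis `λ₁, …, λ_m` of `L`
such that `K ∩ L ⊆ { ν₁λ₁ + ⋯ + ν_mλ_m : νᵢ ∈ ℕ }`. -/
theorem pointed_cone_in_positive_octant_of_lattice_basis
    (m : ℕ) (hm : 0 < m) (K : Set (Fin m → ℝ))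
    -- `K` is a rational polyhedral cone:
    (hK : ∃ s : Finset (Fin m → ℝ), (∀ v ∈ s, ∀ i, ∃ q : ℚ, v i = (q : ℝ)) ∧
      K = {x | ∃ c : (Fin m → ℝ) → ℝ, (∀ v ∈ s, 0 ≤ c v) ∧ x = ∑ v ∈ s, c v • v})
    -- `K` is pointed:
    (hpointed : K ∩ (-K) = {0})
    -- `K` is full dimensional:
    (hfull : (interior K).Nonempty)
    -- `L` is a full-rank lattice:
    (bL : Module.Basis (Fin m) ℝ (Fin m → ℝ))
    (L : AddSubgroup (Fin m → ℝ))
    (hL : L = AddSubgroup.closure (Set.range bL)) :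
    ∃ lam : Fin m → (Fin m → ℝ),
      (∀ i, lam i ∈ L) ∧
      (∀ x ∈ L, ∃! ν : Fin m → ℤ, x = ∑ i, ν i • lam i) ∧
      (∀ x ∈ K ∩ (L : Set (Fin m → ℝ)), ∃ ν : Fin m → ℕ, x = ∑ i, (ν i : ℝ) • lam i) :=
  pointed_cone_in_positive_octant_of_lattice_basis_general m K hK hpointed bL L hL
end

section
/- Let C ⊆ ℝ^m be a convex cone with nonempty topological interior and let M ⊆ ℝ^m be a full-rank lattice. Then the additive subgroup of ℝ^m generated by the set C ∩ M is equal to M. -/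
/-!
A cone with nonempty interior contains balls of every radius, since scaling by `t > 0` turns a
ball of radius `ε` inside it into one of radius `t * ε`. Every point lies within `∑ i, ‖b i‖` of
the lattice spanned by a basis `b`, so a large enough ball in the cone contains a lattice point
`p` together with all the translates `p + b i`; then each generator `b i = (p + b i) - p` is a
difference of lattice points of the cone.
-/

open Metric Pointwise

theorem exists_ball_subset_of_smul_mem {E : Type*} [NormedAddCommGroup E] [NormedSpace ℝ E]
    {C : Set E} (hC : ∀ t : ℝ, 0 < t → ∀ x ∈ C, t • x ∈ C) (hint : (interior C).Nonempty)
    (R : ℝ) : ∃ c, ball c R ⊆ C := by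
  obtain ⟨x₀, hx₀⟩ := hint
  obtain ⟨ε, hε, hball⟩ := Metric.mem_nhds_iff.mp (mem_interior_iff_mem_nhds.mp hx₀)
  set t := max R ε / ε
  have ht : 0 < t := div_pos (lt_max_of_lt_right hε) hε
  refine ⟨t • x₀, fun y hy => ?_⟩
  have hy' : y ∈ t • ball x₀ ε := by
    rw [_root_.smul_ball ht.ne', Real.norm_of_nonneg ht.le, div_mul_cancel₀ _ hε.ne']
    exact ball_subset_ball (le_max_left R ε) hy
  obtain ⟨x, hx, rfl⟩ := hy'
  exact hC t ht x (hball hx)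

theorem Module.Basis.exists_mem_closure_range_norm_sub_le {ι E : Type*} [Fintype ι]
    [NormedAddCommGroup E] [NormedSpace ℝ E] (b : Module.Basis ι ℝ E) (y : E) :
    ∃ p ∈ AddSubgroup.closure (Set.range b), ‖p - y‖ ≤ ∑ i, ‖b i‖ := by
  refine ⟨ZSpan.floor b y, ?_, ?_⟩
  · rw [← Submodule.span_int_eq_addSubgroupClosure]
    exact (ZSpan.floor b y).2
  · rw [norm_sub_rev]
    exact ZSpan.norm_fract_le b y

theorem AddSubgroup.closure_inter_closure_eq_of_ball_subset {E : Type*}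
    [SeminormedAddCommGroup E] {C S : Set E} {B D R : ℝ} (hS : ∀ s ∈ S, ‖s‖ ≤ B)
    (hdense : ∀ y, ∃ p ∈ closure S, ‖p - y‖ ≤ D) {c : E} (hDBR : D + B < R)
    (hball : ball c R ⊆ C) :
    closure (C ∩ closure S) = closure S := by
  refine le_antisymm (closure_le _ |>.mpr Set.inter_subset_right) (closure_le _ |>.mpr ?_)
  intro s hs
  obtain ⟨p, hpS, hp⟩ := hdense c
  have hpC : p ∈ C := hball <| mem_ball_iff_norm.mpr (by linarith [norm_nonneg s, hS s hs])
  have hpsC : p + s ∈ C := hball <| mem_ball_iff_norm.mpr <|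
    calc ‖p + s - c‖ = ‖(p - c) + s‖ := by rw [sub_add_eq_add_sub]
      _ ≤ ‖p - c‖ + ‖s‖ := norm_add_le _ _
      _ < R := by linarith [hS s hs]
  have hpsS : p + s ∈ closure S := add_mem hpS (subset_closure hs)
  simpa using sub_mem (subset_closure ⟨hpsC, hpsS⟩ : p + s ∈ closure (C ∩ closure S))
    (subset_closure ⟨hpC, hpS⟩)

theorem cone_cap_lattice_generates_lattice_general
    (m : ℕ) (C : Set (Fin m → ℝ))
    (hCsmul : ∀ (t : ℝ), 0 < t → ∀ x ∈ C, t • x ∈ C)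
    (hCint : (interior C).Nonempty)
    (bM : Module.Basis (Fin m) ℝ (Fin m → ℝ))
    (M : AddSubgroup (Fin m → ℝ))
    (hM : M = AddSubgroup.closure (Set.range bM)) :
    AddSubgroup.closure (C ∩ (M : Set (Fin m → ℝ))) = M := by
  subst hM
  set K := ∑ i, ‖bM i‖
  have hbound : ∀ s ∈ Set.range bM, ‖s‖ ≤ K := by
    rintro _ ⟨i, rfl⟩
    exact Finset.single_le_sum (fun j _ => norm_nonneg (bM j)) (Finset.mem_univ i)
  obtain ⟨c, hc⟩ := exists_ball_subset_of_smul_mem hCsmul hCint (K + K + 1)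
  exact AddSubgroup.closure_inter_closure_eq_of_ball_subset hbound
    bM.exists_mem_closure_range_norm_sub_le (lt_add_one _) hc

/-- Let `C ⊆ ℝ^m` be a convex cone (closed under addition and under
multiplication by positive reals) with nonempty topological interior, and let `M ⊆ ℝ^m`
be a full-rank lattice (the additive subgroup generated by an ℝ-basis of `ℝ^m`).
Then the additive subgroup generated by `C ∩ M` is `M`. -/
theorem cone_cap_lattice_generates_lattice
    (m : ℕ) (hm : 0 < m) (C : Set (Fin m → ℝ))
    (hCadd : ∀ x ∈ C, ∀ y ∈ C, x + y ∈ C)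
    (hCsmul : ∀ (t : ℝ), 0 < t → ∀ x ∈ C, t • x ∈ C)
    (hCint : (interior C).Nonempty)
    (bM : Module.Basis (Fin m) ℝ (Fin m → ℝ))
    (M : AddSubgroup (Fin m → ℝ))
    (hM : M = AddSubgroup.closure (Set.range bM)) :
    AddSubgroup.closure (C ∩ (M : Set (Fin m → ℝ))) = M :=
  cone_cap_lattice_generates_lattice_general m C hCsmul hCint bM M hM
end

section
/- Let m, k ∈ ℕ and let c, c′ : ℕ^m × ℕ^k → [0, ∞). Then for every r ∈ [0, ∞)^m and s ∈ [0, ∞)^k the following inequality holds in [0, ∞]: Σ_{μ ∈ ℕ^m} Σ_{δ ∈ ℕ^k} ( Σ_{η + η′ = δ} c(μ, η) · c′(μ, η′) ) · s^δ · r^μ ≤ ( Σ_{μ ∈ ℕ^m} Σ_{η ∈ ℕ^k} c(μ, η) · s^η · (√r)^μ ) · ( Σ_{μ ∈ ℕ^m} Σ_{η′ ∈ ℕ^k} c′(μ, η′) · s^{η′} · (√r)^μ ), where √r ∈ [0, ∞)^m is the coordinatewise square root of r, the inner sum Σ_{η + η′ = δ} ranges over all pairs (η, η′) ∈ ℕ^k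 × ℕ^k with η + η′ = δ, and all sums are interpreted as (possibly infinite) sums of nonnegative extended reals. -/
open scoped ENNReal NNReal

/-!
Fix the multi-index `μ`. Summing over `δ` the antidiagonal sums `Σ_{η+η'=δ}` against the
multiplicative weight `s^δ = s^η s^η'` is just the Cauchy product, so the inner sum over `δ` equals
`A μ · B μ` with `A μ = Σ_η c(μ,η) s^η` and `B μ = Σ_η' c'(μ,η') s^η'`. Writing `r^μ = √r^μ · √r^μ`,
the left-hand side becomes `Σ_μ (A μ √r^μ)(B μ √r^μ)`, and a sum of products of nonnegative terms
is at most the product of the sums.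
-/

namespace ENNReal

theorem tsum_antidiagonal_mul_weight {M : Type*} [Add M] (f g w : M → ℝ≥0∞)
    (hw : ∀ a b, w (a + b) = w a * w b) :
    ∑' δ, (∑' p : {p : M × M // p.1 + p.2 = δ}, f p.1.1 * g p.1.2) * w δ
      = (∑' a, f a * w a) * ∑' b, g b * w b := by
  calc ∑' δ, (∑' p : {p : M × M // p.1 + p.2 = δ}, f p.1.1 * g p.1.2) * w δ
      = ∑' δ, ∑' p : {p : M × M // p.1 + p.2 = δ}, f p.1.1 * g p.1.2 * w (p.1.1 + p.1.2) := by
        refine tsum_congr fun δ => ?_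
        rw [← ENNReal.tsum_mul_right]
        exact tsum_congr fun p => by rw [p.2]
    _ = ∑' p : M × M, f p.1 * g p.2 * w (p.1 + p.2) :=
        ENNReal.tsum_fiberwise (fun p : M × M => f p.1 * g p.2 * w (p.1 + p.2)) fun p => p.1 + p.2
    _ = ∑' p : M × M, (f p.1 * w p.1) * (g p.2 * w p.2) :=
        tsum_congr fun p => by rw [hw]; ring
    _ = ∑' a, ∑' b, (f a * w a) * (g b * w b) :=
        ENNReal.tsum_prod (f := fun a b => (f a * w a) * (g b * w b))
    _ = (∑' a, f a * w a) * ∑' b, g b * w b := by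
        simp_rw [ENNReal.tsum_mul_left, ENNReal.tsum_mul_right]

theorem tsum_mul_le_tsum_mul_tsum {α : Type*} (f g : α → ℝ≥0∞) :
    ∑' a, f a * g a ≤ (∑' a, f a) * ∑' a, g a := by
  rw [← ENNReal.tsum_mul_left]
  exact ENNReal.tsum_le_tsum fun a => mul_le_mul_left (ENNReal.le_tsum a) _

end ENNReal

theorem prod_coe_pow_add {ι : Type*} [Fintype ι] (s : ι → ℝ≥0) (a b : ι → ℕ) :
    ∏ i, (s i : ℝ≥0∞) ^ (a + b) i = (∏ i, (s i : ℝ≥0∞) ^ a i) * ∏ i, (s i : ℝ≥0∞) ^ b i := by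
  simp only [Pi.add_apply, pow_add, Finset.prod_mul_distrib]

theorem prod_coe_sqrt_pow_mul_self {ι : Type*} [Fintype ι] (r : ι → ℝ≥0) (μ : ι → ℕ) :
    (∏ i, (NNReal.sqrt (r i) : ℝ≥0∞) ^ μ i) * ∏ i, (NNReal.sqrt (r i) : ℝ≥0∞) ^ μ i
      = ∏ i, (r i : ℝ≥0∞) ^ μ i := by
  rw [← Finset.prod_mul_distrib]
  refine Finset.prod_congr rfl fun i _ => ?_
  rw [← mul_pow, ← ENNReal.coe_mul, NNReal.mul_self_sqrt]

/-- The term-by-term Cauchy–Schwarz-type estimate for Hadamard products: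
for nonnegative coefficient families `c, c'` and nonnegative radii `r, s`,
`Σ_{μ,δ} (Σ_{η+η′=δ} c(μ,η) c′(μ,η′)) s^δ r^μ ≤ (Σ_{μ,η} c(μ,η) s^η √r^μ) (Σ_{μ,η′} c′(μ,η′) s^{η′} √r^μ)`
in the extended nonnegative reals. -/
theorem hadamard_coefficient_estimate
    (m k : ℕ) (c c' : (Fin m → ℕ) → (Fin k → ℕ) → ℝ≥0)
    (r : Fin m → ℝ≥0) (s : Fin k → ℝ≥0) :
    (∑' μ : Fin m → ℕ, ∑' δ : Fin k → ℕ,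
        (∑' p : {p : (Fin k → ℕ) × (Fin k → ℕ) // p.1 + p.2 = δ},
            (c μ p.1.1 : ℝ≥0∞) * (c' μ p.1.2 : ℝ≥0∞)) *
          (∏ i, (s i : ℝ≥0∞) ^ δ i) * (∏ i, (r i : ℝ≥0∞) ^ μ i))
      ≤ (∑' μ : Fin m → ℕ, ∑' η : Fin k → ℕ,
            (c μ η : ℝ≥0∞) * (∏ i, (s i : ℝ≥0∞) ^ η i) *
              (∏ i, (NNReal.sqrt (r i) : ℝ≥0∞) ^ μ i)) *
        (∑' μ : Fin m → ℕ, ∑' η' : Fin k → ℕ,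
            (c' μ η' : ℝ≥0∞) * (∏ i, (s i : ℝ≥0∞) ^ η' i) *
              (∏ i, (NNReal.sqrt (r i) : ℝ≥0∞) ^ μ i)) := by
  calc _ = ∑' μ : Fin m → ℕ,
          ((∑' η, (c μ η : ℝ≥0∞) * ∏ i, (s i : ℝ≥0∞) ^ η i) *
            ∏ i, (NNReal.sqrt (r i) : ℝ≥0∞) ^ μ i) *
          ((∑' η, (c' μ η : ℝ≥0∞) * ∏ i, (s i : ℝ≥0∞) ^ η i) *
            ∏ i, (NNReal.sqrt (r i) : ℝ≥0∞) ^ μ i) := by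
        refine tsum_congr fun μ => ?_
        rw [ENNReal.tsum_mul_right,
          ENNReal.tsum_antidiagonal_mul_weight (fun η => (c μ η : ℝ≥0∞)) (fun η => (c' μ η : ℝ≥0∞))
            (fun η => ∏ i, (s i : ℝ≥0∞) ^ η i) (prod_coe_pow_add s),
          ← prod_coe_sqrt_pow_mul_self r μ]
        ring
    _ ≤ _ := ENNReal.tsum_mul_le_tsum_mul_tsum _ _
    _ = _ := by simp_rw [ENNReal.tsum_mul_right]
end

section
/- Let n be a positive integer, let p ∈ ℂ[y₁, …, y_n] be a polynomial, and let ᾱ ∈ ℂ^n with ᾱ₁ ≠ −1. Then there exists a unique polynomial q ∈ ℂ[y₁, …, y_n] such that the total degree of q equals the total degree of p and, for every x in the open positive orthant (ℝ_{>0})^n, ∂₁ [ x₁ · x^ᾱ · q(log x₁, …, log x_n) ] = x^ᾱ · p(log x₁, …, log x_n), where ∂₁ denotes the partial derivative with respect to x₁. -/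
/-- `x^ᾱ = exp(Σᵢ ᾱᵢ log xᵢ)` for `x` in the positive orthant. -/
noncomputable def xpow {n : ℕ} (x : Fin n → ℝ) (α : Fin n → ℂ) : ℂ :=
  Complex.exp (∑ i, α i * (Real.log (x i) : ℂ))

/-- Evaluation of a polynomial `p ∈ ℂ[y₁,…,yₙ]` at `(log x₁, …, log xₙ)`. -/
noncomputable def pevalLog {n : ℕ} (p : MvPolynomial (Fin n) ℂ) (x : Fin n → ℝ) : ℂ :=
  MvPolynomial.eval (fun i => (Real.log (x i) : ℂ)) p

/-- The partial derivative `∂ⱼ f` of a ℂ-valued function on `ℝ^n`. -/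
noncomputable def pd {n : ℕ} (f : (Fin n → ℝ) → ℂ) (j : Fin n) (x : Fin n → ℝ) : ℂ :=
  deriv (fun t : ℝ => f (Function.update x j t)) (x j)

/-!
Writing `∂₁[x₁ x^ᾱ q(log x)] = x^ᾱ · ((ᾱ₁ + 1) q + ∂q/∂y₁)(log x)`, the problem becomes
`T q = p` for the operator `T = c + ∂/∂y₁` on `ℂ[y₁, …, yₙ]`, with `c = ᾱ₁ + 1 ≠ 0`.
Since `∂/∂y₁` strictly lowers the total degree, `T` preserves it; in particular `T` is injective
on the finite-dimensional space of polynomials of degree `≤ deg p`, hence bijective there.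
Finally, `log` maps the positive orthant onto `ℝⁿ`, on which a complex polynomial is
determined by its values.
-/

open MvPolynomial

namespace MvPolynomial

theorem totalDegree_pderiv_lt {σ R : Type*} [CommSemiring R] (i : σ) {f : MvPolynomial σ R}
    (hf : pderiv i f ≠ 0) : (pderiv i f).totalDegree < f.totalDegree := by
  have hlt : ∀ m ∈ (pderiv i f).support, (m.sum fun _ e => e) < f.totalDegree := by
    intro m hm
    have hcoeff : coeff (m + Finsupp.single i 1) f ≠ 0 := by
      intro h
      rw [mem_support_iff, coeff_pderiv, h, zero_mul] at hm
      exact hm rfl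
    have hle := le_totalDegree (mem_support_iff.mpr hcoeff)
    rw [Finsupp.sum_add_index' (fun _ => rfl) (fun _ _ _ => rfl), Finsupp.sum_single_index rfl]
      at hle
    omega
  obtain ⟨m, hm⟩ := support_nonempty.mpr hf
  exact (Finset.sup_lt_iff (lt_of_le_of_lt (Nat.zero_le _) (hlt m hm))).mpr hlt

section Shift

variable {σ K : Type*} [Field K] {c : K} (hc : c ≠ 0) (i : σ)
include hc

theorem totalDegree_smul_of_ne_zero (f : MvPolynomial σ K) :
    (c • f).totalDegree = f.totalDegree := by
  rw [totalDegree, support_smul_eq hc, ← totalDegree]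

theorem totalDegree_smul_add_pderiv (f : MvPolynomial σ K) :
    (c • f + pderiv i f).totalDegree = f.totalDegree := by
  have hsmul := totalDegree_smul_of_ne_zero hc f
  by_cases hf : pderiv i f = 0
  · rw [hf, add_zero, hsmul]
  · rw [totalDegree_add_eq_left_of_totalDegree_lt (hsmul ▸ totalDegree_pderiv_lt i hf), hsmul]

theorem smul_add_pderiv_eq_zero_iff (f : MvPolynomial σ K) :
    c • f + pderiv i f = 0 ↔ f = 0 := by
  refine ⟨fun h => ?_, fun h => by rw [h, smul_zero, map_zero, add_zero]⟩
  by_cases hf : pderiv i f = 0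
  · rw [hf, add_zero, smul_eq_zero] at h
    exact h.resolve_left hc
  · have hderiv : pderiv i f = -(c • f) := eq_neg_of_add_eq_zero_right h
    have := totalDegree_pderiv_lt i hf
    rw [hderiv, totalDegree_neg, totalDegree_smul_of_ne_zero hc] at this
    exact absurd this (lt_irrefl _)

theorem existsUnique_smul_add_pderiv_eq [Finite σ] (p : MvPolynomial σ K) :
    ∃! q : MvPolynomial σ K, c • q + pderiv i q = p := by
  set T : MvPolynomial σ K →ₗ[K] MvPolynomial σ K := c • LinearMap.id + (pderiv i).toLinearMap
  have hT : ∀ f, T f = c • f + pderiv i f := fun _ => rfl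
  have hTinj : Function.Injective T :=
    (injective_iff_map_eq_zero T).mpr fun f => (smul_add_pderiv_eq_zero_iff hc i f).mp
  have hmaps : ∀ f ∈ restrictTotalDegree σ K p.totalDegree,
      T f ∈ restrictTotalDegree σ K p.totalDegree := by
    intro f hf
    rw [mem_restrictTotalDegree] at hf ⊢
    rwa [hT, totalDegree_smul_add_pderiv hc]
  obtain ⟨⟨q, _⟩, hq⟩ := LinearMap.injective_iff_surjective.mp
    (fun a b h => Subtype.ext (hTinj (congrArg Subtype.val h)) :
      Function.Injective (T.restrict hmaps))
    ⟨p, (mem_restrictTotalDegree _ _ _).mpr le_rfl⟩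
  exact ⟨q, congrArg Subtype.val hq, fun q' hq' => hTinj (hq'.trans (congrArg Subtype.val hq).symm)⟩

end Shift

theorem hasDerivAt_eval_update {𝕜 σ : Type*} [NontriviallyNormedField 𝕜] [DecidableEq σ]
    (v : σ → 𝕜) (i : σ) (q : MvPolynomial σ 𝕜) (z : 𝕜) :
    HasDerivAt (fun w => eval (Function.update v i w) q)
      (eval (Function.update v i z) (pderiv i q)) z := by
  induction q using MvPolynomial.induction_on with
  | C a => simpa using hasDerivAt_const z a
  | add p q hp hq => simpa only [map_add] using hp.fun_add hq
  | mul_X p j hp =>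
    simp only [map_mul, eval_X, pderiv_mul, pderiv_X]
    rcases eq_or_ne j i with rfl | hj
    · simpa [add_comm] using hp.fun_mul (hasDerivAt_id z)
    · simpa [Function.update_of_ne hj, hj] using hp.mul_const (v j)

end MvPolynomial

theorem hasDerivAt_pevalLog_update {n : ℕ} (q : MvPolynomial (Fin n) ℂ) (x : Fin n → ℝ)
    (j : Fin n) (hx : x j ≠ 0) :
    HasDerivAt (fun t => pevalLog q (Function.update x j t))
      (pevalLog (pderiv j q) x / x j) (x j) := by
  set L : Fin n → ℂ := fun i => (Real.log (x i) : ℂ)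
  have hupdate : ∀ t : ℝ, (fun i => (Real.log (Function.update x j t i) : ℂ))
      = Function.update L j (Real.log t : ℂ) := fun t =>
    funext fun i => Function.apply_update (fun _ t => (Real.log t : ℂ)) x j t i
  have hlog : HasDerivAt (fun t : ℝ => (Real.log t : ℂ)) ((x j)⁻¹ : ℝ) (x j) :=
    (Real.hasDerivAt_log hx).ofReal_comp
  have := (hasDerivAt_eval_update L j q (L j)).comp (x j) hlog
  simp only [Function.update_eq_self] at this
  simpa [pevalLog, hupdate, div_eq_mul_inv, Function.comp_def, L] using this

theorem xpow_eq_exp_pevalLog {n : ℕ} (x : Fin n → ℝ) (α : Fin n → ℂ) :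
    xpow x α = Complex.exp (pevalLog (∑ i, C (α i) * X i) x) := by
  simp [xpow, pevalLog]

theorem hasDerivAt_xpow_update {n : ℕ} (α : Fin n → ℂ) (x : Fin n → ℝ) (j : Fin n)
    (hx : x j ≠ 0) :
    HasDerivAt (fun t => xpow (Function.update x j t) α) (xpow x α * (α j / x j)) (x j) := by
  have := (hasDerivAt_pevalLog_update (∑ i, C (α i) * X i) x j hx).cexp
  simp only [← xpow_eq_exp_pevalLog] at this
  simpa [pevalLog, Pi.single_apply] using this

theorem pd_coord_mul_xpow_mul_pevalLog {n : ℕ} (α : Fin n → ℂ) (q : MvPolynomial (Fin n) ℂ)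
    (j : Fin n) (x : Fin n → ℝ) (hx : x j ≠ 0) :
    pd (fun y => (y j : ℂ) * xpow y α * pevalLog q y) j x
      = xpow x α * pevalLog ((α j + 1) • q + pderiv j q) x := by
  have hcoord : HasDerivAt (fun t : ℝ => (t : ℂ)) 1 (x j) := by
    simpa using (hasDerivAt_id (x j)).ofReal_comp
  have hprod := (hcoord.fun_mul (hasDerivAt_xpow_update α x j hx)).fun_mul
    (hasDerivAt_pevalLog_update q x j hx)
  have hxj : (x j : ℂ) ≠ 0 := Complex.ofReal_ne_zero.mpr hx
  simp only [pd, Function.update_self]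
  rw [hprod.deriv, Function.update_eq_self]
  simp only [pevalLog, map_add, smul_eval]
  field_simp
  ring

theorem eq_of_pevalLog_eq {n : ℕ} {p q : MvPolynomial (Fin n) ℂ}
    (h : ∀ x : Fin n → ℝ, (∀ i, 0 < x i) → pevalLog p x = pevalLog q x) : p = q := by
  refine funext_set (fun _ => Set.range ((↑) : ℝ → ℂ))
    (fun _ => Set.infinite_range_of_injective Complex.ofReal_injective) fun z hz => ?_
  choose y hy using fun i => hz i (Set.mem_univ i)
  have := h (fun i => Real.exp (y i)) fun i => Real.exp_pos _
  simpa [pevalLog, hy] using this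

/-- **Lemma `lemma:antilog`.** If `ᾱ₁ ≠ −1`, there is a unique polynomial
`q` with `deg q = deg p` and `∂₁[x₁ x^ᾱ q(log x)] = x^ᾱ p(log x)` on the positive
orthant. -/
theorem antiderivative_polynomial_exists_unique
    (n : ℕ) (hn : 0 < n) (p : MvPolynomial (Fin n) ℂ) (ᾱ : Fin n → ℂ)
    (hᾱ : ᾱ ⟨0, hn⟩ ≠ -1) :
    ∃! q : MvPolynomial (Fin n) ℂ,
      q.totalDegree = p.totalDegree ∧
      ∀ x : Fin n → ℝ, (∀ i, 0 < x i) →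
        pd (fun y => (y ⟨0, hn⟩ : ℂ) * xpow y ᾱ * pevalLog q y) ⟨0, hn⟩ x
          = xpow x ᾱ * pevalLog p x := by
  have hc : ᾱ ⟨0, hn⟩ + 1 ≠ 0 := fun h => hᾱ (eq_neg_of_add_eq_zero_left h)
  obtain ⟨q, hq, hunique⟩ := existsUnique_smul_add_pderiv_eq hc ⟨0, hn⟩ p
  refine ⟨q, ⟨hq ▸ (totalDegree_smul_add_pderiv hc _ q).symm, fun x hx => ?_⟩, ?_⟩
  · rw [pd_coord_mul_xpow_mul_pevalLog _ _ _ _ (hx _).ne', hq]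
  · rintro q' ⟨-, hq'⟩
    refine hunique q' (eq_of_pevalLog_eq fun x hx =>
      mul_left_cancel₀ (a := xpow x ᾱ) (Complex.exp_ne_zero _) ?_)
    rw [← hq' x hx, pd_coord_mul_xpow_mul_pevalLog _ _ _ _ (hx _).ne']
end

section
/- Let A be a d × n integer matrix with columns a₁, …, a_n ∈ ℤ^d, let F ⊆ {a₁, …, a_n}, and let b ∈ ℤ^d. Let ℕA be the additive submonoid of ℤ^d generated by a₁, …, a_n, let ℤF be the additive subgroup of ℤ^d generated by F, let ℕρ(A) be the additive submonoid of ℤ^{d+1} generated by ρ(0), ρ(a₁), …, ρ(a_n), and let ℤρ(F) be the additive subgroup of ℤ^{d+1} generated by ρ(F) = {ρ(0)} ∪ {ρ(f) : f ∈ F}. Then (b + ℤF) ∩ (ℕA + ℤF) = ∅ if and only if (ρ(b) + ℤρ(F)) ∩ (ℕρ(A) + ℤρ(F)) = ∅. -/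
/-!
Dropping the first coordinate is a homomorphism `ℤ^{d+1} → ℤ^d` sending `ρ(b)` to `b`,
`ℤρ(F)` onto `ℤF` and `ℕρ(A)` onto `ℕA`, and its kernel `ℤρ(0)` lies in `ℤρ(F)`. For any
homomorphism `T` whose kernel lies in a subgroup `G`, the coset `c + G` meets `M + G` exactly
when `T c + T G` meets `T M + T G`: a witness downstairs lifts, the defect of the lift being a
kernel element that is absorbed into `G`.
-/

open Pointwise

/-- The homogenization map `ρ : ℤ^d → ℤ^{d+1}`, `ρ(v) = (1, v)`. -/
def rhoZ {d : ℕ} (v : Fin d → ℤ) : Fin (d + 1) → ℤ := Fin.cons 1 v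

theorem image_add_inter_add_eq_empty_iff_of_ker_le {H K : Type*} [AddCommGroup H]
    [AddCommGroup K] (T : H →+ K) (G : AddSubgroup H) (M : AddSubmonoid H) (hker : T.ker ≤ G)
    (c : H) :
    (fun v => T c + v) '' (G.map T : Set K) ∩ ((M.map T : Set K) + (G.map T : Set K)) = ∅ ↔
      (fun v => c + v) '' (G : Set H) ∩ ((M : Set H) + (G : Set H)) = ∅ := by
  simp only [← Set.not_nonempty_iff_eq_empty, not_iff_not]
  constructor
  · rintro ⟨-, ⟨-, ⟨g, hg, rfl⟩, rfl⟩, -, ⟨m, hm, rfl⟩, -, ⟨g₂, hg₂, rfl⟩, hsum⟩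
    have hk : c + g - (m + g₂) ∈ G := hker <| by simp [T.mem_ker, map_sub, map_add, ← hsum]
    exact ⟨c + g, ⟨g, hg, rfl⟩, m, hm, g₂ + (c + g - (m + g₂)), add_mem hg₂ hk,
      by simp only; abel⟩
  · rintro ⟨-, ⟨g, hg, rfl⟩, m, hm, g₂, hg₂, hsum⟩
    exact ⟨T (c + g), ⟨T g, ⟨g, hg, rfl⟩, (map_add T c g).symm⟩, T m, ⟨m, hm, rfl⟩, T g₂,
      ⟨g₂, hg₂, rfl⟩, by simp only at hsum ⊢; rw [← map_add, hsum]⟩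

def tailAddHom (d : ℕ) : (Fin (d + 1) → ℤ) →+ (Fin d → ℤ) where
  toFun := Fin.tail
  map_zero' := rfl
  map_add' _ _ := rfl

theorem tailAddHom_rhoZ {d : ℕ} (v : Fin d → ℤ) : tailAddHom d (rhoZ v) = v :=
  rfl

theorem ker_tailAddHom_le_zmultiples (d : ℕ) :
    (tailAddHom d).ker ≤ AddSubgroup.zmultiples (rhoZ (0 : Fin d → ℤ)) := by
  intro u hu
  refine ⟨u 0, funext fun i => Fin.cases ?_ (fun j => ?_) i⟩
  · simp [rhoZ]
  · have hj : u j.succ = 0 := congrFun hu j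
    simp [rhoZ, hj]

theorem image_tailAddHom_rhoZ_zero_union {d : ℕ} (S : Set (Fin d → ℤ)) :
    tailAddHom d '' ({rhoZ 0} ∪ rhoZ '' S) = insert 0 S := by
  simp only [Set.singleton_union, Set.image_insert_eq, Set.image_image, tailAddHom_rhoZ,
    Set.image_id']

theorem map_tailAddHom_addSubgroupClosure {d : ℕ} (S : Set (Fin d → ℤ)) :
    (AddSubgroup.closure ({rhoZ 0} ∪ rhoZ '' S)).map (tailAddHom d) = AddSubgroup.closure S := by
  rw [AddMonoidHom.map_closure, image_tailAddHom_rhoZ_zero_union,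
    AddSubgroup.closure_insert_zero]

theorem map_tailAddHom_addSubmonoidClosure {d : ℕ} {ι : Type*} (a : ι → Fin d → ℤ) :
    (AddSubmonoid.closure ({rhoZ 0} ∪ Set.range fun j => rhoZ (a j))).map (tailAddHom d) =
      AddSubmonoid.closure (Set.range a) := by
  rw [AddMonoidHom.map_mclosure, Set.range_comp', image_tailAddHom_rhoZ_zero_union,
    AddSubmonoid.closure_insert_zero]

theorem homogenization_preserves_ranking_lattice_condition_general
    (d n : ℕ) (a : Fin n → (Fin d → ℤ)) (F : Set (Fin d → ℤ))
    (b : Fin d → ℤ) :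
    ((fun v => b + v) '' (AddSubgroup.closure F : AddSubgroup (Fin d → ℤ))) ∩
        ((AddSubmonoid.closure (Set.range a) : AddSubmonoid (Fin d → ℤ)) +
          (AddSubgroup.closure F : AddSubgroup (Fin d → ℤ)) : Set (Fin d → ℤ)) = ∅ ↔
      ((fun v => rhoZ b + v) ''
          (AddSubgroup.closure ({rhoZ (0 : Fin d → ℤ)} ∪ rhoZ '' F) :
            AddSubgroup (Fin (d + 1) → ℤ))) ∩
        ((AddSubmonoid.closure ({rhoZ (0 : Fin d → ℤ)} ∪ Set.range (fun j => rhoZ (a j))) :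
            AddSubmonoid (Fin (d + 1) → ℤ)) +
          (AddSubgroup.closure ({rhoZ (0 : Fin d → ℤ)} ∪ rhoZ '' F) :
            AddSubgroup (Fin (d + 1) → ℤ)) : Set (Fin (d + 1) → ℤ)) = ∅ := by
  have hker : (tailAddHom d).ker ≤ AddSubgroup.closure ({rhoZ 0} ∪ rhoZ '' F) :=
    (ker_tailAddHom_le_zmultiples d).trans <|
      AddSubgroup.zmultiples_le.2 (AddSubgroup.subset_closure (Or.inl rfl))
  have key := image_add_inter_add_eq_empty_iff_of_ker_le (tailAddHom d) _
    (AddSubmonoid.closure ({rhoZ 0} ∪ Set.range fun j => rhoZ (a j))) hker (rhoZ b)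
  rwa [map_tailAddHom_addSubgroupClosure, map_tailAddHom_addSubmonoidClosure,
    tailAddHom_rhoZ] at key

/-- Let `A` be a `d × n` integer matrix with columns `a₁, …, a_n`,
`F ⊆ {a₁, …, a_n}` and `b ∈ ℤ^d`. Then `(b + ℤF) ∩ (ℕA + ℤF) = ∅` if and only if
`(ρ(b) + ℤρ(F)) ∩ (ℕρ(A) + ℤρ(F)) = ∅`. -/
theorem homogenization_preserves_ranking_lattice_condition
    (d n : ℕ) (a : Fin n → (Fin d → ℤ)) (F : Set (Fin d → ℤ))
    (hF : F ⊆ Set.range a) (b : Fin d → ℤ) :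
    ((fun v => b + v) '' (AddSubgroup.closure F : AddSubgroup (Fin d → ℤ))) ∩
        ((AddSubmonoid.closure (Set.range a) : AddSubmonoid (Fin d → ℤ)) +
          (AddSubgroup.closure F : AddSubgroup (Fin d → ℤ)) : Set (Fin d → ℤ)) = ∅ ↔
      ((fun v => rhoZ b + v) ''
          (AddSubgroup.closure ({rhoZ (0 : Fin d → ℤ)} ∪ rhoZ '' F) :
            AddSubgroup (Fin (d + 1) → ℤ))) ∩
        ((AddSubmonoid.closure ({rhoZ (0 : Fin d → ℤ)} ∪ Set.range (fun j => rhoZ (a j))) :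
            AddSubmonoid (Fin (d + 1) → ℤ)) +
          (AddSubgroup.closure ({rhoZ (0 : Fin d → ℤ)} ∪ rhoZ '' F) :
            AddSubgroup (Fin (d + 1) → ℤ)) : Set (Fin (d + 1) → ℤ)) = ∅ :=
  homogenization_preserves_ranking_lattice_condition_general d n a F b
end

section
/- Let a, b, c ∈ ℂ with c ∉ ℤ_{≤0} (i.e., c is not zero or a negative integer). Then the Gauss hypergeometric series F(z; a, b, c) = Σ_{n=0}^∞ [ ∏_{ℓ=0}^{n−1} (a+ℓ)(b+ℓ)/(c+ℓ) ] · z^n / n! converges absolutely for every z ∈ ℂ with |z| < 1, and the function F(·; a, b, c) satisfies the Gauss hypergeometric equation z(1−z) F″(z) + (c − z(a+b+1)) F′(z) − a b F(z) = 0 for all z ∈ ℂ with |z| < 1. -/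
/-!
The coefficients `q n = gaussCoef a b c n` satisfy
`q (n + 1) = q n * (a + n) (b + n) / ((n + 1) (c + n))`, a ratio tending to `1`, so by the ratio
test `∑ ‖q n‖ rⁿ` converges for every `r < 1`. Inside the unit disc the series can therefore be
differentiated termwise twice (Weierstrass). Multiplying a power series by `z` only shifts its
coefficients, so the left-hand side of the equation is the power series whose `n`-th coefficient
is `(n + 1) (c + n) q (n + 1) - (a + n) (b + n) q n`, and this vanishes as soon as `c + n ≠ 0`.
-/

/-- The `n`-th coefficient of the Gauss hypergeometric series:
`[∏_{ℓ=0}^{n−1} (a+ℓ)(b+ℓ)/(c+ℓ)] / n!`. -/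
noncomputable def gaussCoef (a b c : ℂ) (n : ℕ) : ℂ :=
  (∏ ℓ ∈ Finset.range n, ((a + ℓ) * (b + ℓ) / (c + ℓ))) / (n.factorial : ℂ)

/-- The Gauss hypergeometric series `F(z; a, b, c)`. -/
noncomputable def gaussF (a b c : ℂ) (z : ℂ) : ℂ :=
  ∑' n : ℕ, gaussCoef a b c n * z ^ n

open Filter Topology Metric

section PowerSeries

variable {𝕜 : Type*}

def derivCoeff [Semiring 𝕜] (q : ℕ → 𝕜) (n : ℕ) : 𝕜 := (n + 1) * q (n + 1)

def OneLeRadius [Norm 𝕜] (q : ℕ → 𝕜) : Prop :=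
  ∀ r : ℝ, 0 ≤ r → r < 1 → Summable fun n ↦ ‖q n‖ * r ^ n

theorem OneLeRadius.summable_norm_mul_pow [NormedField 𝕜] {q : ℕ → 𝕜} (hq : OneLeRadius q)
    {z : 𝕜} (hz : ‖z‖ < 1) : Summable fun n ↦ ‖q n * z ^ n‖ := by
  simpa only [norm_mul, norm_pow] using hq ‖z‖ (norm_nonneg z) hz

theorem oneLeRadius_of_tendsto_norm_ratio [NormedField 𝕜] {q w : ℕ → 𝕜}
    (hqw : ∀ n, q (n + 1) = q n * w n) (hw : Tendsto (fun n ↦ ‖w n‖) atTop (𝓝 1)) :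
    OneLeRadius q := by
  intro r hr0 hr1
  obtain ⟨ρ, hrρ, hρ1⟩ := exists_between hr1
  have hev : ∀ᶠ n in atTop, ‖w n‖ * r < ρ := by
    refine (?_ : Tendsto (fun n ↦ ‖w n‖ * r) atTop (𝓝 r)).eventually_lt_const hrρ
    simpa using hw.mul_const r
  refine summable_of_ratio_norm_eventually_le hρ1 ?_
  filter_upwards [hev] with n hn
  rw [Real.norm_of_nonneg (by positivity), Real.norm_of_nonneg (by positivity), hqw, norm_mul]
  calc ‖q n‖ * ‖w n‖ * r ^ (n + 1) = (‖w n‖ * r) * (‖q n‖ * r ^ n) := by ring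
    _ ≤ ρ * (‖q n‖ * r ^ n) := by gcongr

theorem oneLeRadius_derivCoeff [RCLike 𝕜] {q : ℕ → 𝕜} (hq : OneLeRadius q) :
    OneLeRadius (derivCoeff q) := by
  intro r hr0 hr1
  obtain ⟨s, hrs, hs1⟩ := exists_between hr1
  have hs0 : 0 < s := hr0.trans_lt hrs
  obtain ⟨t, ht0, ht1, rfl⟩ : ∃ t, 0 ≤ t ∧ t < 1 ∧ t * s = r :=
    ⟨r / s, by positivity, (div_lt_one hs0).2 hrs, div_mul_cancel₀ r hs0.ne'⟩
  have htend : Tendsto (fun n : ℕ ↦ ((n : ℝ) + 1) * t ^ n) atTop (𝓝 0) := by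
    simpa [add_mul] using (tendsto_self_mul_const_pow_of_lt_one ht0 ht1).add
      (tendsto_pow_atTop_nhds_zero_of_lt_one ht0 ht1)
  have hsum : Summable fun n ↦ s⁻¹ * (‖q (n + 1)‖ * s ^ (n + 1)) :=
    ((summable_nat_add_iff 1).mpr (hq s hs0.le hs1)).mul_left _
  refine hsum.of_norm_bounded_eventually_nat ?_
  filter_upwards [htend.eventually_le_const zero_lt_one] with n hn
  have hnorm : ‖(n : 𝕜) + 1‖ = n + 1 := by exact_mod_cast RCLike.norm_natCast (K := 𝕜) (n + 1)
  rw [Real.norm_of_nonneg (by positivity), derivCoeff, norm_mul, hnorm, mul_pow]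
  calc (n + 1) * ‖q (n + 1)‖ * (t ^ n * s ^ n) = ((n + 1) * t ^ n) * (‖q (n + 1)‖ * s ^ n) := by
        ring
    _ ≤ 1 * (‖q (n + 1)‖ * s ^ n) := by gcongr
    _ = s⁻¹ * (‖q (n + 1)‖ * s ^ (n + 1)) := by field_simp; ring

theorem hasSum_mul_pow_of_shift [CommRing 𝕜] [TopologicalSpace 𝕜] [IsTopologicalRing 𝕜]
    {p p' : ℕ → 𝕜} {z s : 𝕜} (h0 : p' 0 = 0) (hp' : ∀ n, p' (n + 1) = p n)
    (h : HasSum (fun n ↦ p n * z ^ n) s) :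
    HasSum (fun n ↦ p' n * z ^ n) (z * s) := by
  rw [← hasSum_nat_add_iff' 1]
  simpa [h0, hp', pow_succ, mul_comm, mul_left_comm] using h.mul_left z

theorem OneLeRadius.hasSum_deriv {q : ℕ → ℂ} (hq : OneLeRadius q) {z : ℂ} (hz : ‖z‖ < 1) :
    HasSum (fun n ↦ derivCoeff q n * z ^ n) (deriv (fun w ↦ ∑' n, q n * w ^ n) z) := by
  obtain ⟨r, hzr, hr1⟩ := exists_between hz
  have hsum := Complex.hasSum_deriv_of_summable_norm (F := fun n w ↦ q n * w ^ n)
    (hq r ((norm_nonneg z).trans hzr.le) hr1) (fun n ↦ by fun_prop) isOpen_ball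
    (fun n w hw ↦ ?_) (mem_ball_zero_iff.2 hzr)
  · rw [← hasSum_nat_add_iff' 1] at hsum
    simpa [derivCoeff, mul_comm, mul_left_comm, mul_assoc] using hsum
  · rw [norm_mul, norm_pow]
    gcongr
    exact (mem_ball_zero_iff.1 hw).le

theorem OneLeRadius.hasSum_deriv_deriv {q : ℕ → ℂ} (hq : OneLeRadius q) {z : ℂ}
    (hz : ‖z‖ < 1) :
    HasSum (fun n ↦ derivCoeff (derivCoeff q) n * z ^ n)
      (deriv (deriv fun w ↦ ∑' n, q n * w ^ n) z) := by
  have hderiv : deriv (fun w ↦ ∑' n, q n * w ^ n) =ᶠ[𝓝 z]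
      fun w ↦ ∑' n, derivCoeff q n * w ^ n := by
    filter_upwards [isOpen_ball.mem_nhds (mem_ball_zero_iff.2 hz)] with w hw
    exact (hq.hasSum_deriv (mem_ball_zero_iff.1 hw)).tsum_eq.symm
  rw [hderiv.deriv_eq]
  exact (oneLeRadius_derivCoeff hq).hasSum_deriv hz

theorem hypergeometric_ode_of_hasSum [CommRing 𝕜] [TopologicalSpace 𝕜] [IsTopologicalRing 𝕜]
    [T2Space 𝕜] {a b c z F F' F'' : 𝕜} {q : ℕ → 𝕜}
    (hrec : ∀ n : ℕ, (n + 1) * (c + n) * q (n + 1) = (a + n) * (b + n) * q n)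
    (hF : HasSum (fun n ↦ q n * z ^ n) F) (hF' : HasSum (fun n ↦ derivCoeff q n * z ^ n) F')
    (hF'' : HasSum (fun n ↦ derivCoeff (derivCoeff q) n * z ^ n) F'') :
    z * (1 - z) * F'' + (c - z * (a + b + 1)) * F' - a * b * F = 0 := by
  have hzF'' : HasSum (fun n ↦ (n * derivCoeff q n) * z ^ n) (z * F'') :=
    hasSum_mul_pow_of_shift (by simp) (fun n ↦ by simp only [derivCoeff]; push_cast; ring) hF''
  have hz2F'' : HasSum (fun n ↦ (n * (n - 1) * q n) * z ^ n) (z * (z * F'')) :=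
    hasSum_mul_pow_of_shift (by simp) (fun n ↦ by simp only [derivCoeff]; push_cast; ring) hzF''
  have hzF' : HasSum (fun n ↦ (n * q n) * z ^ n) (z * F') :=
    hasSum_mul_pow_of_shift (by simp) (fun n ↦ by simp only [derivCoeff]; push_cast; ring) hF'
  have hsum := (hzF''.sub hz2F'').add
    ((hF'.mul_left c).sub ((hzF'.mul_left (a + b + 1)).add (hF.mul_left (a * b))))
  calc z * (1 - z) * F'' + (c - z * (a + b + 1)) * F' - a * b * F
      = z * F'' - z * (z * F'') + (c * F' - ((a + b + 1) * (z * F') + a * b * F)) := by ring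
    _ = 0 := hsum.unique <| hasSum_zero.congr_fun fun n ↦ by
        simp only [derivCoeff]
        linear_combination z ^ n * hrec n

end PowerSeries

-- No hypothesis on `c` is needed: if `c + n = 0`, both sides vanish because `0⁻¹ = 0`.
theorem gaussCoef_succ (a b c : ℂ) (n : ℕ) :
    gaussCoef a b c (n + 1) = gaussCoef a b c n * ((a + n) / (n + 1) * ((b + n) / (c + n))) := by
  simp only [gaussCoef, Finset.prod_range_succ, Nat.factorial_succ, Nat.cast_mul, div_eq_mul_inv,
    mul_inv, Nat.cast_succ]
  ring

theorem gaussCoef_recurrence {c : ℂ} (hc : ∀ k : ℕ, c + k ≠ 0) (a b : ℂ) (n : ℕ) :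
    (n + 1) * (c + n) * gaussCoef a b c (n + 1) = (a + n) * (b + n) * gaussCoef a b c n := by
  rw [gaussCoef_succ]
  field_simp [hc n, Nat.cast_add_one_ne_zero n]

theorem oneLeRadius_gaussCoef (a b c : ℂ) : OneLeRadius (gaussCoef a b c) := by
  refine oneLeRadius_of_tendsto_norm_ratio (gaussCoef_succ a b c) ?_
  have h := (tendsto_add_mul_div_add_mul_atTop_nhds a 1 1 one_ne_zero).mul
    (tendsto_add_mul_div_add_mul_atTop_nhds b c 1 one_ne_zero)
  simpa [add_comm (1 : ℂ)] using h.norm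

/-- For `c ∉ ℤ_{≤0}`, the Gauss hypergeometric series converges
absolutely on the unit disc and satisfies the Gauss hypergeometric equation there. -/
theorem gauss_series_converges_and_solves_ode
    (a b c : ℂ) (hc : ∀ k : ℕ, c + (k : ℂ) ≠ 0) :
    (∀ z : ℂ, ‖z‖ < 1 →
      Summable (fun n : ℕ => ‖gaussCoef a b c n * z ^ n‖)) ∧
    (∀ z : ℂ, ‖z‖ < 1 →
      z * (1 - z) * deriv (deriv (gaussF a b c)) z
          + (c - z * (a + b + 1)) * deriv (gaussF a b c) z
          - a * b * gaussF a b c z = 0) := by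
  have hq := oneLeRadius_gaussCoef a b c
  refine ⟨fun z hz ↦ hq.summable_norm_mul_pow hz, fun z hz ↦ ?_⟩
  exact hypergeometric_ode_of_hasSum (gaussCoef_recurrence hc a b)
    (hq.summable_norm_mul_pow hz).of_norm.hasSum (hq.hasSum_deriv hz)
    (hq.hasSum_deriv_deriv hz)
end

section
/- Let a, b, c ∈ ℂ with c ∉ ℤ. Then the functions G₁, G₂ : (0,1) → ℂ defined by G₁(z) = F(z; a, b, c) and G₂(z) = z^{1−c} · F(z; a+1−c, b+1−c, 2−c), where z^{1−c} = exp((1−c) log z) with the real logarithm, are linearly independent over ℂ. -/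
/-!
Both series are Mathlib's `₂F₁`, whose radius of convergence is positive, so they tend to `1`
as `z → 0⁺`. If `s G₁ + t G₂ = 0` with `t ≠ 0`, then `z^{1-c} = -s F₁(z) / (t F₂(z))` would
tend to `-s/t`. But `z ↦ z^w` with `w ≠ 0` has no nonzero limit at `0⁺`: replacing `z` by
`e^r z` multiplies it by `e^{wr}`, so a nonzero limit forces `e^{wr} = 1` for all real `r`,
and differentiating at `r = 0` gives `w = 0`. Hence `s = 0`, and then `t = 0` because `G₂`
does not vanish near `0`; with `t = 0`, also `s = 0` since `G₁ → 1`.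
-/

open Filter Topology Finset

lemma ascPochhammer_eval_eq_prod_range {R : Type*} [CommSemiring R] (n : ℕ) (r : R) :
    (ascPochhammer R n).eval r = ∏ j ∈ range n, (r + j) := by
  induction n with
  | zero => simp
  | succ n ih => simp [ascPochhammer_succ_right, ih, ← Finset.prod_range_succ]

section RCLike

variable {𝕂 𝔸 : Type*} [RCLike 𝕂] [NormedDivisionRing 𝔸] [NormedAlgebra 𝕂 𝔸]

lemma ordinaryHypergeometricSeries_radius_pos (a b c : 𝕂) :
    0 < (ordinaryHypergeometricSeries 𝔸 a b c).radius := by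
  by_cases h : ∃ k : ℕ, (k : 𝕂) = -a ∨ (k : 𝕂) = -b ∨ (k : 𝕂) = -c
  · obtain ⟨k, hk | hk | hk⟩ := h <;> obtain rfl := neg_eq_iff_eq_neg.mp hk.symm
    · simp [ordinaryHypergeometric_radius_top_of_neg_nat₁]
    · simp [ordinaryHypergeometric_radius_top_of_neg_nat₂]
    · simp [ordinaryHypergeometric_radius_top_of_neg_nat₃]
  · push Not at h
    simp [ordinaryHypergeometricSeries_radius_eq_one 𝔸 a b c h]

lemma continuousAt_ordinaryHypergeometric_zero [CompleteSpace 𝔸] (a b c : 𝕂) :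
    ContinuousAt (₂F₁ a b c : 𝔸 → 𝔸) 0 :=
  ((ordinaryHypergeometricSeries 𝔸 a b c).hasFPowerSeriesOnBall
    (ordinaryHypergeometricSeries_radius_pos a b c)).hasFPowerSeriesAt.continuousAt

end RCLike

lemma gaussCoef_eq_ordinaryHypergeometricCoefficient (a b c : ℂ) (n : ℕ) :
    gaussCoef a b c n = ordinaryHypergeometricCoefficient a b c n := by
  simp only [gaussCoef, ordinaryHypergeometricCoefficient, ascPochhammer_eval_eq_prod_range,
    prod_div_distrib, prod_mul_distrib]
  ring

lemma gaussF_eq_ordinaryHypergeometric (a b c : ℂ) : gaussF a b c = ₂F₁ a b c := by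
  ext z
  simp [gaussF, ordinaryHypergeometric_eq_tsum, gaussCoef_eq_ordinaryHypergeometricCoefficient]

lemma tendsto_gaussF_nhdsGT_zero (a b c : ℂ) :
    Tendsto (fun x : ℝ => gaussF a b c x) (𝓝[>] 0) (𝓝 1) := by
  have h := (continuousAt_ordinaryHypergeometric_zero (𝔸 := ℂ) a b c).tendsto.comp
    (Complex.continuous_ofReal.tendsto 0)
  rw [ordinaryHypergeometric_zero] at h
  simpa [gaussF_eq_ordinaryHypergeometric, Function.comp_def] using h.mono_left nhdsWithin_le_nhds

lemma eq_zero_of_forall_exp_mul_eq_one {w : ℂ} (h : ∀ r : ℝ, Complex.exp (w * r) = 1) :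
    w = 0 := by
  have hderiv : HasDerivAt (fun r : ℝ => Complex.exp (w * r))
      (Complex.exp (w * (0 : ℝ)) * (w * 1)) 0 :=
    (((hasDerivAt_id (0 : ℝ)).ofReal_comp).const_mul w).cexp
  have hconst : (fun r : ℝ => Complex.exp (w * r)) = fun _ => 1 := funext h
  rw [hconst] at hderiv
  simpa using hderiv.unique (hasDerivAt_const (0 : ℝ) (1 : ℂ))

lemma eq_zero_of_tendsto_exp_mul_log_nhdsGT_zero {w L : ℂ} (hw : w ≠ 0)
    (h : Tendsto (fun x : ℝ => Complex.exp (w * Real.log x)) (𝓝[>] 0) (𝓝 L)) : L = 0 := by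
  by_contra hL
  refine hw (eq_zero_of_forall_exp_mul_eq_one fun r => ?_)
  have hscale : Tendsto (Real.exp r * ·) (𝓝[>] (0 : ℝ)) (𝓝[>] 0) := by
    simpa [comap_mulLeft_nhdsGT_zero (Real.exp_pos r)] using
      tendsto_comap (f := (Real.exp r * ·)) (x := 𝓝[>] (0 : ℝ))
  have hshift : Tendsto (fun x : ℝ => Complex.exp (w * Real.log (Real.exp r * x))) (𝓝[>] 0)
      (𝓝 (Complex.exp (w * r) * L)) := by
    refine (tendsto_const_nhds.mul h).congr' ?_
    filter_upwards [self_mem_nhdsWithin] with x hx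
    rw [Real.log_mul (Real.exp_pos r).ne' (ne_of_gt hx), Real.log_exp, Complex.ofReal_add,
      mul_add, Complex.exp_add]
  exact (mul_eq_right₀ hL).mp (tendsto_nhds_unique hshift (h.comp hscale))

/-- For `c ∉ ℤ`, the two solutions
`G₁(z) = F(z; a, b, c)` and `G₂(z) = z^{1−c} F(z; a+1−c, b+1−c, 2−c)` of the Gauss
hypergeometric equation are linearly independent over ℂ on `(0,1)`. -/
theorem gauss_solutions_linearly_independent
    (a b c : ℂ) (hc : ∀ k : ℤ, c ≠ (k : ℂ))
    (G₁ G₂ : ℝ → ℂ)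
    (hG₁ : ∀ z : ℝ, G₁ z = gaussF a b c z)
    (hG₂ : ∀ z : ℝ, G₂ z =
      Complex.exp ((1 - c) * (Real.log z : ℂ)) * gaussF (a + 1 - c) (b + 1 - c) (2 - c) z) :
    ∀ s t : ℂ, (∀ z ∈ Set.Ioo (0 : ℝ) 1, s * G₁ z + t * G₂ z = 0) → s = 0 ∧ t = 0 := by
  intro s t H
  have hw : 1 - c ≠ 0 := fun h => hc 1 (by push_cast; linear_combination -h)
  have hF₁ := tendsto_gaussF_nhdsGT_zero a b c
  have hF₂ := tendsto_gaussF_nhdsGT_zero (a + 1 - c) (b + 1 - c) (2 - c)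
  have hrel : ∀ᶠ x in 𝓝[>] (0 : ℝ), s * G₁ x + t * G₂ x = 0 :=
    eventually_of_mem (Ioo_mem_nhdsGT one_pos) H
  have ht : t = 0 := by
    by_contra ht
    have hpow : Tendsto (fun x : ℝ => Complex.exp ((1 - c) * Real.log x)) (𝓝[>] 0)
        (𝓝 (-s / t)) := by
      have hquot : Tendsto (fun x : ℝ => -s * gaussF a b c x /
          (t * gaussF (a + 1 - c) (b + 1 - c) (2 - c) x)) (𝓝[>] 0) (𝓝 (-s / t)) := by
        simpa [Pi.div_def] using ((tendsto_const_nhds (x := -s)).mul hF₁).div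
          ((tendsto_const_nhds (x := t)).mul hF₂) (by simpa using ht)
      refine hquot.congr' ?_
      filter_upwards [hrel, hF₂.eventually_ne one_ne_zero] with x hx hF₂x
      rw [hG₁, hG₂] at hx
      field_simp
      linear_combination -hx
    have hs : s = 0 := by
      simpa [ht] using eq_zero_of_tendsto_exp_mul_log_nhdsGT_zero hw hpow
    obtain ⟨x, hx, hF₂x⟩ := (hrel.and (hF₂.eventually_ne one_ne_zero)).exists
    simp [hG₂, hs, ht, Complex.exp_ne_zero, hF₂x] at hx
  obtain ⟨x, hx, hF₁x⟩ := (hrel.and (hF₁.eventually_ne one_ne_zero)).exists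
  simp only [hG₁, ht, zero_mul, add_zero, mul_eq_zero, hF₁x, or_false] at hx
  exact ⟨hx, ht⟩
end
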